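/- arXiv:2605.11059 — 3 statements merged into one kernel-verified Lean document; each statement's English description precedes it below -/
import Mathlib

section
/- Let λ > 0, 0 < β₁ ≤ β₂ < 1, and let (η_j)_{j≥1} be step sizes with η_j ∈ (0, 1/λ). Define α_{i,τ} = ∏_{j=i}^{τ} (1 − η_j λ) with the convention α_{τ+1,τ} = 1, and κ^λ_{i,T} = Σ_{τ=i+1}^{T} ((1 − β₁) η_τ α_{τ+1,T} / (1 − β₁^τ)) (β₁^{τ−i−1} + 2 β₂^{τ−i−1}). Then Σ_{i=0}^{T−1} κ^λ_{i,T} ≤ C_κ / λ, where C_κ = 1 + 2 (1 − β₁) / (1 − β₂). -/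
/-- The cumulative weight-decay factor `α_{i,τ} = ∏_{j=i}^{τ} (1 − η_j λ)`
(an empty product when `i > τ`, so `α_{τ+1,τ} = 1`). -/
def adamAlpha (lam : ℝ) (η : ℕ → ℝ) (i τ : ℕ) : ℝ :=
  ∏ j ∈ Finset.Icc i τ, (1 - η j * lam)

/-- The AdamW perturbation coefficients
`κ^λ_{i,T} = Σ_{τ=i+1}^{T} ((1−β₁) η_τ α_{τ+1,T} / (1−β₁^τ)) (β₁^{τ−i−1} + 2β₂^{τ−i−1})`. -/
noncomputable def adamKappa (lam β₁ β₂ : ℝ) (η : ℕ → ℝ) (i T : ℕ) : ℝ :=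
  ∑ τ ∈ Finset.Icc (i + 1) T,
    ((1 - β₁) * η τ * adamAlpha lam η (τ + 1) T / (1 - β₁ ^ τ)) *
      (β₁ ^ (τ - i - 1) + 2 * β₂ ^ (τ - i - 1))

lemma tele_le (lam : ℝ) (η : ℕ → ℝ) (hlam : 0 < lam)
    (hη : ∀ j, 1 ≤ j → 0 < η j ∧ η j < 1 / lam) (T : ℕ) :
    ∑ τ ∈ Finset.Icc 1 T, η τ * adamAlpha lam η (τ + 1) T ≤ 1 / lam := by
  have hfac : ∀ j, 1 ≤ j → 0 < 1 - η j * lam ∧ 1 - η j * lam < 1 := by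
    intro j hj
    obtain ⟨h1, h2⟩ := hη j hj
    constructor
    · have := (lt_div_iff₀ hlam).mp h2
      linarith
    · nlinarith
  rw [le_div_iff₀ hlam, Finset.sum_mul]
  set g : ℕ → ℝ := fun τ => adamAlpha lam η τ T with hg
  have hstep : ∀ τ ∈ Finset.Icc 1 T, η τ * adamAlpha lam η (τ + 1) T * lam
      = g (τ + 1) - g τ := by
    intro τ hτ
    simp only [Finset.mem_Icc] at hτ
    have hlt : τ < T + 1 := by omega
    have : g τ = (1 - η τ * lam) * g (τ + 1) := by
      simp only [hg, adamAlpha, ← Finset.Ico_add_one_right_eq_Icc]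
      exact Finset.prod_eq_prod_Ico_succ_bot hlt _
    rw [this]; ring
  rw [Finset.sum_congr rfl hstep]
  have hIcc : Finset.Icc 1 T = Finset.map ⟨(· + 1), add_left_injective 1⟩ (Finset.range T) := by
    ext x
    simp only [Finset.mem_Icc, Finset.mem_map, Finset.mem_range, Function.Embedding.coeFn_mk]
    constructor
    · rintro ⟨h1, h2⟩; exact ⟨x - 1, by omega, by omega⟩
    · rintro ⟨a, ha, rfl⟩; omega
  rw [hIcc, Finset.sum_map]
  simp only [Function.Embedding.coeFn_mk]
  rw [Finset.sum_range_sub (fun i => g (i + 1)) T]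
  have hg1 : g (T + 1) = 1 := by
    simp [hg, adamAlpha, Finset.Icc_eq_empty_of_lt (by omega : T < T + 1)]
  have hg0 : 0 ≤ g (0 + 1) := by
    simp only [hg, adamAlpha]
    apply Finset.prod_nonneg
    intro j hj
    simp only [Finset.mem_Icc] at hj
    exact (hfac j hj.1).1.le
  rw [hg1]; linarith


/-- Summability of the AdamW perturbation coefficients:
`Σ_{i=0}^{T−1} κ^λ_{i,T} ≤ C_κ / λ` with `C_κ = 1 + 2 (1 − β₁)/(1 − β₂)`. -/
theorem stmt_16 (lam β₁ β₂ : ℝ) (η : ℕ → ℝ) (hlam : 0 < lam)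
    (hβ₁ : 0 < β₁) (hβ₁₂ : β₁ ≤ β₂) (hβ₂ : β₂ < 1)
    (hη : ∀ j, 1 ≤ j → 0 < η j ∧ η j < 1 / lam) (T : ℕ) :
    ∑ i ∈ Finset.range T, adamKappa lam β₁ β₂ η i T ≤
      (1 + 2 * (1 - β₁) / (1 - β₂)) / lam := by
  have hβ₁1 : β₁ < 1 := lt_of_le_of_lt hβ₁₂ hβ₂
  have hβ₂0 : 0 < β₂ := lt_of_lt_of_le hβ₁ hβ₁₂
  have hC0 : 0 ≤ 1 + 2 * (1 - β₁) / (1 - β₂) := by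
    have := div_nonneg (by linarith : (0:ℝ) ≤ 2 * (1 - β₁)) (by linarith : (0:ℝ) ≤ 1 - β₂)
    rw [mul_div_assoc] at *
    linarith
  unfold adamKappa
  rw [Finset.sum_comm' (t' := Finset.Icc 1 T) (s' := fun τ => Finset.range τ)
    (by intro i τ; simp only [Finset.mem_range, Finset.mem_Icc]; omega)]
  have key : ∀ τ ∈ Finset.Icc 1 T,
      (∑ i ∈ Finset.range τ,
        ((1 - β₁) * η τ * adamAlpha lam η (τ + 1) T / (1 - β₁ ^ τ)) *
          (β₁ ^ (τ - i - 1) + 2 * β₂ ^ (τ - i - 1)))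
      ≤ (1 + 2 * (1 - β₁) / (1 - β₂)) * (η τ * adamAlpha lam η (τ + 1) T) := by
    intro τ hτ
    simp only [Finset.mem_Icc] at hτ
    have hE0 : 0 ≤ η τ * adamAlpha lam η (τ + 1) T := by
      apply mul_nonneg (hη τ hτ.1).1.le
      apply Finset.prod_nonneg
      intro j hj
      simp only [Finset.mem_Icc] at hj
      have := (lt_div_iff₀ hlam).mp (hη j (by omega)).2
      linarith
    rw [← Finset.mul_sum]
    have hrefl : ∑ i ∈ Finset.range τ, (β₁ ^ (τ - i - 1) + 2 * β₂ ^ (τ - i - 1))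
        = ∑ k ∈ Finset.range τ, (β₁ ^ k + 2 * β₂ ^ k) := by
      rw [← Finset.sum_range_reflect (fun k => β₁ ^ k + 2 * β₂ ^ k) τ]
      apply Finset.sum_congr rfl
      intro i hi
      have h : τ - i - 1 = τ - 1 - i := by omega
      rw [h]
    rw [hrefl, Finset.sum_add_distrib, ← Finset.mul_sum]
    have hn1 : (1:ℝ) - β₁ ≠ 0 := by linarith
    have hn2 : (1:ℝ) - β₂ ≠ 0 := by linarith
    have hp1 : β₁ ^ τ < 1 := pow_lt_one₀ hβ₁.le hβ₁1 (by omega)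
    have hp2 : β₂ ^ τ < 1 := pow_lt_one₀ hβ₂0.le hβ₂ (by omega)
    have hpp : β₁ ^ τ ≤ β₂ ^ τ := pow_le_pow_left₀ hβ₁.le hβ₁₂ τ
    have hd1 : (0:ℝ) < 1 - β₁ ^ τ := by linarith
    have hd2 : (0:ℝ) < 1 - β₂ := by linarith
    have hn3 : (1:ℝ) - β₁ ^ τ ≠ 0 := ne_of_gt hd1
    have hg1 : ∑ k ∈ Finset.range τ, β₁ ^ k = (1 - β₁ ^ τ) / (1 - β₁) := by
      rw [geom_sum_eq (by intro h; rw [h] at hβ₁1; linarith)]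
      have hb : β₁ - 1 ≠ 0 := by intro h; apply hn1; linarith
      field_simp
      ring
    have hg2 : ∑ k ∈ Finset.range τ, β₂ ^ k = (1 - β₂ ^ τ) / (1 - β₂) := by
      rw [geom_sum_eq (by intro h; rw [h] at hβ₂; linarith)]
      have hb : β₂ - 1 ≠ 0 := by intro h; apply hn2; linarith
      field_simp
      ring
    rw [hg1, hg2]
    have hexp : (1 - β₁) * η τ * adamAlpha lam η (τ + 1) T / (1 - β₁ ^ τ) *
        ((1 - β₁ ^ τ) / (1 - β₁) + 2 * ((1 - β₂ ^ τ) / (1 - β₂)))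
        = (η τ * adamAlpha lam η (τ + 1) T) *
          (1 + 2 * (1 - β₁) * (1 - β₂ ^ τ) / ((1 - β₂) * (1 - β₁ ^ τ))) := by
      field_simp
    rw [hexp]
    have hD : 2 * (1 - β₁) * (1 - β₂ ^ τ) / ((1 - β₂) * (1 - β₁ ^ τ)) ≤ 2 * (1 - β₁) / (1 - β₂) := by
      rw [div_le_div_iff₀ (by positivity) hd2]
      nlinarith [mul_nonneg (mul_nonneg (by linarith : (0:ℝ) ≤ 2 * (1 - β₁)) hd2.le)
        (sub_nonneg.mpr hpp)]
    nlinarith [mul_le_mul_of_nonneg_left hD hE0]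
  calc _ ≤ ∑ τ ∈ Finset.Icc 1 T,
        (1 + 2 * (1 - β₁) / (1 - β₂)) * (η τ * adamAlpha lam η (τ + 1) T) :=
        Finset.sum_le_sum key
    _ = (1 + 2 * (1 - β₁) / (1 - β₂)) * ∑ τ ∈ Finset.Icc 1 T, η τ * adamAlpha lam η (τ + 1) T := by
        rw [Finset.mul_sum]
    _ ≤ (1 + 2 * (1 - β₁) / (1 - β₂)) * (1 / lam) :=
        mul_le_mul_of_nonneg_left (tele_le lam η hlam hη T) hC0
    _ = (1 + 2 * (1 - β₁) / (1 - β₂)) / lam := by ring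
end

section
/- Let 0 < β₁ ≤ β₂ < 1, ε > 0, n, j ∈ ℕ with j ≥ 1, and let g₁, …, g_j ∈ ℝⁿ. Define componentwise the bias-corrected momentum and variance accumulators m̂_j = ((1 − β₁)/(1 − β₁^j)) Σ_{i=1}^{j} β₁^{j−i} g_i and v̂_j = ((1 − β₂)/(1 − β₂^j)) Σ_{i=1}^{j} β₂^{j−i} g_i ⊙ g_i, where ⊙ is the componentwise product. Then the Adam update satisfies the componentwise bound ‖m̂_j / (√(v̂_j) + ε)‖_∞ ≤ √(((1 − β₂^j)(1 − β₁)) / ((1 − β₁^j)(1 − β₂))) ≤ √((1 − β₁)/(1 − β₂)), where the square root and division are taken componentwise and ‖·‖_∞ is the maximum absolute value of the components. -/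
/-- Bias-corrected Adam momentum accumulator (component `l`):
`m̂_j = ((1 − β₁)/(1 − β₁^j)) Σ_{i=1}^{j} β₁^{j−i} g_i`. -/
noncomputable def adamMhat {n : ℕ} (β₁ : ℝ) (j : ℕ) (g : ℕ → Fin n → ℝ) (l : Fin n) : ℝ :=
  ((1 - β₁) / (1 - β₁ ^ j)) * ∑ i ∈ Finset.Icc 1 j, β₁ ^ (j - i) * g i l

/-- Bias-corrected Adam variance accumulator (component `l`):
`v̂_j = ((1 − β₂)/(1 − β₂^j)) Σ_{i=1}^{j} β₂^{j−i} g_i ⊙ g_i`. -/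
noncomputable def adamVhat {n : ℕ} (β₂ : ℝ) (j : ℕ) (g : ℕ → Fin n → ℝ) (l : Fin n) : ℝ :=
  ((1 - β₂) / (1 - β₂ ^ j)) * ∑ i ∈ Finset.Icc 1 j, β₂ ^ (j - i) * (g i l) ^ 2

lemma adam_sum_pow (β : ℝ) (hβ : β ≠ 1) (j : ℕ) :
    ∑ i ∈ Finset.Icc 1 j, β ^ (j - i) = (1 - β ^ j) / (1 - β) := by
  have h1 : ∑ i ∈ Finset.Icc 1 j, β ^ (j - i) = ∑ k ∈ Finset.range j, β ^ k := by
    rw [← Finset.Ico_add_one_right_eq_Icc, Finset.sum_Ico_eq_sum_range, ← Finset.sum_range_reflect]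
    refine Finset.sum_congr rfl fun x hx => ?_
    have hx' := Finset.mem_range.mp hx
    congr 1
    omega
  rw [h1, geom_sum_eq hβ]
  rw [div_eq_div_iff (sub_ne_zero.mpr hβ) (sub_ne_zero.mpr (Ne.symm hβ))]
  ring

/-- Componentwise bound on the Adam update:
`‖m̂_j / (√v̂_j + ε)‖_∞ ≤ √(((1−β₂^j)(1−β₁))/((1−β₁^j)(1−β₂))) ≤ √((1−β₁)/(1−β₂))`. -/
theorem stmt_17 (β₁ β₂ ε : ℝ) (hβ₁ : 0 < β₁) (hβ₁₂ : β₁ ≤ β₂) (hβ₂ : β₂ < 1) (hε : 0 < ε)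
    (n j : ℕ) (hj : 1 ≤ j) (g : ℕ → Fin n → ℝ) :
    (∀ l : Fin n,
        |adamMhat β₁ j g l / (Real.sqrt (adamVhat β₂ j g l) + ε)| ≤
          Real.sqrt ((1 - β₂ ^ j) * (1 - β₁) / ((1 - β₁ ^ j) * (1 - β₂)))) ∧
      Real.sqrt ((1 - β₂ ^ j) * (1 - β₁) / ((1 - β₁ ^ j) * (1 - β₂))) ≤
        Real.sqrt ((1 - β₁) / (1 - β₂)) := by
  have hβ₁1 : β₁ < 1 := lt_of_le_of_lt hβ₁₂ hβ₂
  have hβ₂0 : 0 < β₂ := lt_of_lt_of_le hβ₁ hβ₁₂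
  have hjne : j ≠ 0 := by omega
  have h1j : β₁ ^ j < 1 := pow_lt_one₀ hβ₁.le hβ₁1 hjne
  have h2j : β₂ ^ j < 1 := pow_lt_one₀ hβ₂0.le hβ₂ hjne
  have hA : (0:ℝ) < 1 - β₁ := by linarith
  have hB : (0:ℝ) < 1 - β₂ := by linarith
  have hAj : (0:ℝ) < 1 - β₁ ^ j := by linarith
  have hBj : (0:ℝ) < 1 - β₂ ^ j := by linarith
  have hpowle : β₁ ^ j ≤ β₂ ^ j := pow_le_pow_left₀ hβ₁.le hβ₁₂ j
  set K : ℝ := (1 - β₂ ^ j) * (1 - β₁) / ((1 - β₁ ^ j) * (1 - β₂)) with hK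
  have hK0 : 0 ≤ K := by positivity
  constructor
  · intro l
    set S₂ : ℝ := ∑ i ∈ Finset.Icc 1 j, β₂ ^ (j - i) * (g i l) ^ 2 with hS₂
    have hS₂0 : 0 ≤ S₂ := Finset.sum_nonneg fun i _ => by positivity
    have hv : adamVhat β₂ j g l = (1 - β₂) / (1 - β₂ ^ j) * S₂ := rfl
    have hv0 : 0 ≤ adamVhat β₂ j g l := by rw [hv]; positivity
    -- Cauchy–Schwarz step
    have hCS : (∑ i ∈ Finset.Icc 1 j, β₁ ^ (j - i) * g i l) ^ 2 ≤
        (∑ i ∈ Finset.Icc 1 j, β₁ ^ (j - i)) *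
          ∑ i ∈ Finset.Icc 1 j, β₁ ^ (j - i) * (g i l) ^ 2 := by
      have := Finset.sum_mul_sq_le_sq_mul_sq (Finset.Icc 1 j)
        (fun i => Real.sqrt (β₁ ^ (j - i)))
        (fun i => Real.sqrt (β₁ ^ (j - i)) * g i l)
      have he : ∀ i : ℕ, Real.sqrt (β₁ ^ (j - i)) * (Real.sqrt (β₁ ^ (j - i)) * g i l)
          = β₁ ^ (j - i) * g i l := by
        intro i
        rw [← mul_assoc, Real.mul_self_sqrt (by positivity)]
      have he2 : ∀ i : ℕ, (Real.sqrt (β₁ ^ (j - i))) ^ 2 = β₁ ^ (j - i) := fun i =>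
        Real.sq_sqrt (by positivity)
      have he3 : ∀ i : ℕ, (Real.sqrt (β₁ ^ (j - i)) * g i l) ^ 2
          = β₁ ^ (j - i) * (g i l) ^ 2 := by
        intro i; rw [mul_pow, he2]
      simpa only [he, he2, he3] using this
    have hmono : ∑ i ∈ Finset.Icc 1 j, β₁ ^ (j - i) * (g i l) ^ 2 ≤ S₂ := by
      apply Finset.sum_le_sum
      intro i _
      exact mul_le_mul_of_nonneg_right (pow_le_pow_left₀ hβ₁.le hβ₁₂ _) (sq_nonneg _)
    have hsum1 : ∑ i ∈ Finset.Icc 1 j, β₁ ^ (j - i) = (1 - β₁ ^ j) / (1 - β₁) :=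
      adam_sum_pow β₁ (ne_of_lt hβ₁1) j
    have hCS2 : (∑ i ∈ Finset.Icc 1 j, β₁ ^ (j - i) * g i l) ^ 2 ≤
        (1 - β₁ ^ j) / (1 - β₁) * S₂ := by
      calc (∑ i ∈ Finset.Icc 1 j, β₁ ^ (j - i) * g i l) ^ 2
          ≤ (∑ i ∈ Finset.Icc 1 j, β₁ ^ (j - i)) *
              ∑ i ∈ Finset.Icc 1 j, β₁ ^ (j - i) * (g i l) ^ 2 := hCS
        _ ≤ (1 - β₁ ^ j) / (1 - β₁) * S₂ := by
            rw [hsum1]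
            exact mul_le_mul_of_nonneg_left hmono (by positivity)
    have hm2 : (adamMhat β₁ j g l) ^ 2 ≤ K * adamVhat β₂ j g l := by
      have hm : adamMhat β₁ j g l
          = (1 - β₁) / (1 - β₁ ^ j) * ∑ i ∈ Finset.Icc 1 j, β₁ ^ (j - i) * g i l := rfl
      rw [hm, hv, mul_pow]
      have : ((1 - β₁) / (1 - β₁ ^ j)) ^ 2 * ((1 - β₁ ^ j) / (1 - β₁) * S₂)
          = K * ((1 - β₂) / (1 - β₂ ^ j) * S₂) := by
        rw [hK]; field_simp
      calc ((1 - β₁) / (1 - β₁ ^ j)) ^ 2 * (∑ i ∈ Finset.Icc 1 j, β₁ ^ (j - i) * g i l) ^ 2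
          ≤ ((1 - β₁) / (1 - β₁ ^ j)) ^ 2 * ((1 - β₁ ^ j) / (1 - β₁) * S₂) :=
            mul_le_mul_of_nonneg_left hCS2 (sq_nonneg _)
        _ = K * ((1 - β₂) / (1 - β₂ ^ j) * S₂) := this
    have habs : |adamMhat β₁ j g l| ≤ Real.sqrt K * Real.sqrt (adamVhat β₂ j g l) := by
      rw [← Real.sqrt_mul hK0]
      rw [← Real.sqrt_sq_eq_abs]
      exact Real.sqrt_le_sqrt hm2
    have hden : 0 < Real.sqrt (adamVhat β₂ j g l) + ε := by positivity
    rw [abs_div, abs_of_pos hden, div_le_iff₀ hden]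
    calc |adamMhat β₁ j g l| ≤ Real.sqrt K * Real.sqrt (adamVhat β₂ j g l) := habs
      _ ≤ Real.sqrt K * (Real.sqrt (adamVhat β₂ j g l) + ε) := by
          apply mul_le_mul_of_nonneg_left (by linarith) (Real.sqrt_nonneg _)
  · apply Real.sqrt_le_sqrt
    rw [hK, div_le_div_iff₀ (by positivity) hB]
    nlinarith [mul_nonneg hA.le hB.le]
end

section
/- Let 0 < β₁ ≤ β₂ < 1, ε > 0, n, j ∈ ℕ with j ≥ 1, and let g⁽¹⁾₁, …, g⁽¹⁾_j and g⁽²⁾₁, …, g⁽²⁾_j be two sequences in ℝⁿ. For each sequence define componentwise m̂⁽ˡ⁾_j = ((1 − β₁)/(1 − β₁^j)) Σ_{i=1}^{j} β₁^{j−i} g⁽ˡ⁾_i and v̂⁽ˡ⁾_j = ((1 − β₂)/(1 − β₂^j)) Σ_{i=1}^{j} β₂^{j−i} g⁽ˡ⁾_i ⊙ g⁽ˡ⁾_i, l = 1, 2. Then, with Δ_i = ‖g⁽¹⁾_i − g⁽²⁾_i‖ the Euclidean norm of the gradient difference, ‖ m̂⁽¹⁾_j / (√(v̂⁽¹⁾_j)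 + ε) − m̂⁽²⁾_j / (√(v̂⁽²⁾_j) + ε) ‖² ≤ (2(1 − β₁) / (ε² (1 − β₁^j))) · Σ_{i=1}^{j} (β₁^{j−i} + 2 β₂^{j−i}) Δ_i², where square root and division are componentwise and ‖·‖ is the Euclidean norm on ℝⁿ. -/
private lemma sum_pow_sub_icc (β : ℝ) (j : ℕ) :
    ∑ i ∈ Finset.Icc 1 j, β ^ (j - i) = ∑ t ∈ Finset.range j, β ^ t := by
  rw [← Finset.Ico_add_one_right_eq_Icc, Finset.sum_Ico_eq_sum_range, ← Finset.sum_range_reflect (fun t => β ^ t) j]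
  apply Finset.sum_congr (by simp) fun t ht => ?_
  congr 1
  simp at ht
  omega

private lemma minkowski_aux (s : Finset ℕ) (a b : ℕ → ℝ) :
    Real.sqrt (∑ i ∈ s, (a i + b i) ^ 2) ≤
      Real.sqrt (∑ i ∈ s, a i ^ 2) + Real.sqrt (∑ i ∈ s, b i ^ 2) := by
  have hCS := Real.sum_mul_le_sqrt_mul_sqrt s a b
  have hA : (0:ℝ) ≤ Real.sqrt (∑ i ∈ s, a i ^ 2) := Real.sqrt_nonneg _
  have hB : (0:ℝ) ≤ Real.sqrt (∑ i ∈ s, b i ^ 2) := Real.sqrt_nonneg _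
  have hA2 : Real.sqrt (∑ i ∈ s, a i ^ 2) ^ 2 = ∑ i ∈ s, a i ^ 2 :=
    Real.sq_sqrt (Finset.sum_nonneg fun _ _ => sq_nonneg _)
  have hB2 : Real.sqrt (∑ i ∈ s, b i ^ 2) ^ 2 = ∑ i ∈ s, b i ^ 2 :=
    Real.sq_sqrt (Finset.sum_nonneg fun _ _ => sq_nonneg _)
  have hexp : ∑ i ∈ s, (a i + b i) ^ 2
      = ∑ i ∈ s, a i ^ 2 + 2 * ∑ i ∈ s, a i * b i + ∑ i ∈ s, b i ^ 2 := by
    rw [Finset.mul_sum, ← Finset.sum_add_distrib, ← Finset.sum_add_distrib]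
    exact Finset.sum_congr rfl fun i _ => by ring
  calc Real.sqrt (∑ i ∈ s, (a i + b i) ^ 2)
      ≤ Real.sqrt ((Real.sqrt (∑ i ∈ s, a i ^ 2) + Real.sqrt (∑ i ∈ s, b i ^ 2)) ^ 2) := by
        apply Real.sqrt_le_sqrt; rw [hexp, add_sq, hA2, hB2]; linarith [hCS]
    _ = _ := Real.sqrt_sq (by positivity)

set_option maxHeartbeats 1000000 in
private lemma adam_key (β₁ β₂ ε : ℝ) (hβ₁ : 0 < β₁) (hβ₁₂ : β₁ ≤ β₂) (hβ₂ : β₂ < 1) (hε : 0 < ε)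
    (n j : ℕ) (hj : 1 ≤ j) (g₁ g₂ : ℕ → Fin n → ℝ) (l : Fin n) :
    (adamMhat β₁ j g₁ l / (Real.sqrt (adamVhat β₂ j g₁ l) + ε) -
      adamMhat β₁ j g₂ l / (Real.sqrt (adamVhat β₂ j g₂ l) + ε)) ^ 2 ≤
    (2 * (1 - β₁) / (ε ^ 2 * (1 - β₁ ^ j))) *
      ∑ i ∈ Finset.Icc 1 j, (β₁ ^ (j - i) + 2 * β₂ ^ (j - i)) * (g₁ i l - g₂ i l) ^ 2 := by
  have hβ₁1 : β₁ < 1 := lt_of_le_of_lt hβ₁₂ hβ₂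
  have hβ₂0 : 0 < β₂ := lt_of_lt_of_le hβ₁ hβ₁₂
  have hjne : j ≠ 0 := Nat.one_le_iff_ne_zero.mp hj
  have h1j : 0 < 1 - β₁ ^ j := by
    have : β₁ ^ j < 1 := pow_lt_one₀ hβ₁.le hβ₁1 hjne
    linarith
  have h2j : 0 < 1 - β₂ ^ j := by
    have : β₂ ^ j < 1 := pow_lt_one₀ hβ₂0.le hβ₂ hjne
    linarith
  set c₁ : ℝ := (1 - β₁) / (1 - β₁ ^ j) with hc₁def
  set c₂ : ℝ := (1 - β₂) / (1 - β₂ ^ j) with hc₂def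
  have hc₁ : 0 < c₁ := div_pos (by linarith) h1j
  have hc₂ : 0 < c₂ := div_pos (by linarith) h2j
  set s := Finset.Icc 1 j with hs
  set δ : ℕ → ℝ := fun i => g₁ i l - g₂ i l with hδ
  set E₁ : ℝ := ∑ i ∈ s, β₁ ^ (j - i) * δ i ^ 2 with hE₁
  set E₂ : ℝ := ∑ i ∈ s, β₂ ^ (j - i) * δ i ^ 2 with hE₂
  have hE₁0 : 0 ≤ E₁ := Finset.sum_nonneg fun i _ => by positivity
  have hE₂0 : 0 ≤ E₂ := Finset.sum_nonneg fun i _ => by positivity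
  -- geometric sums
  have hS₁ : c₁ * ∑ i ∈ s, β₁ ^ (j - i) = 1 := by
    rw [hs, sum_pow_sub_icc, geom_sum_eq (by linarith : β₁ ≠ 1)]
    rw [hc₁def, div_mul_div_comm, div_eq_one_iff_eq (mul_ne_zero h1j.ne' (by linarith : β₁ - 1 < 0).ne)]
    ring
  have hS₂ : c₂ * ∑ i ∈ s, β₂ ^ (j - i) = 1 := by
    rw [hs, sum_pow_sub_icc, geom_sum_eq (by linarith : β₂ ≠ 1)]
    rw [hc₂def, div_mul_div_comm, div_eq_one_iff_eq (mul_ne_zero h2j.ne' (by linarith : β₂ - 1 < 0).ne)]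
    ring
  set A : ℝ := adamMhat β₁ j g₁ l with hA
  set B : ℝ := adamMhat β₁ j g₂ l with hB
  set V₁ : ℝ := adamVhat β₂ j g₁ l with hV₁
  set V₂ : ℝ := adamVhat β₂ j g₂ l with hV₂
  have hV₁0 : 0 ≤ V₁ := by
    rw [hV₁, adamVhat]
    apply mul_nonneg hc₂.le (Finset.sum_nonneg fun i _ => by positivity)
  have hV₂0 : 0 ≤ V₂ := by
    rw [hV₂, adamVhat]
    apply mul_nonneg hc₂.le (Finset.sum_nonneg fun i _ => by positivity)
  set s₁ : ℝ := Real.sqrt V₁ + ε with hs₁def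
  set s₂ : ℝ := Real.sqrt V₂ + ε with hs₂def
  have hs₁ε : ε ≤ s₁ := by rw [hs₁def]; linarith [Real.sqrt_nonneg V₁]
  have hs₂ε : ε ≤ s₂ := by rw [hs₂def]; linarith [Real.sqrt_nonneg V₂]
  have hs₁0 : 0 < s₁ := lt_of_lt_of_le hε hs₁ε
  have hs₂0 : 0 < s₂ := lt_of_lt_of_le hε hs₂ε
  have hs₂sq : V₂ ≤ s₂ ^ 2 := by
    rw [hs₂def, add_sq]
    have h2 : 0 ≤ Real.sqrt V₂ * ε := mul_nonneg (Real.sqrt_nonneg V₂) hε.le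
    linarith [Real.sq_sqrt hV₂0, sq_nonneg ε]
  -- Cauchy-Schwarz helper
  have CS : ∀ β : ℝ, 0 < β → ∀ h : ℕ → ℝ,
      (∑ i ∈ s, β ^ (j - i) * h i) ^ 2 ≤
        (∑ i ∈ s, β ^ (j - i)) * ∑ i ∈ s, β ^ (j - i) * h i ^ 2 := by
    intro β hβ h
    have h1 : ∀ i, β ^ (j - i) = Real.sqrt (β ^ (j - i)) ^ 2 := fun i =>
      (Real.sq_sqrt (by positivity)).symm
    calc (∑ i ∈ s, β ^ (j - i) * h i) ^ 2
        = (∑ i ∈ s, Real.sqrt (β ^ (j - i)) * (Real.sqrt (β ^ (j - i)) * h i)) ^ 2 := by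
          congr 1
          exact Finset.sum_congr rfl fun i _ => by
            rw [← mul_assoc, Real.mul_self_sqrt (by positivity)]
      _ ≤ (∑ i ∈ s, Real.sqrt (β ^ (j - i)) ^ 2) *
            ∑ i ∈ s, (Real.sqrt (β ^ (j - i)) * h i) ^ 2 :=
          Finset.sum_mul_sq_le_sq_mul_sq s _ _
      _ = (∑ i ∈ s, β ^ (j - i)) * ∑ i ∈ s, β ^ (j - i) * h i ^ 2 := by
          congr 1
          · exact Finset.sum_congr rfl fun i _ => Real.sq_sqrt (by positivity)
          · exact Finset.sum_congr rfl fun i _ => by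
              rw [mul_pow, Real.sq_sqrt (by positivity)]
  -- Fact 1 : (A - B)^2 ≤ c₁ * E₁
  have hAB : A - B = c₁ * ∑ i ∈ s, β₁ ^ (j - i) * δ i := by
    rw [hA, hB, adamMhat, adamMhat, ← mul_sub, ← Finset.sum_sub_distrib]
    congr 1
    exact Finset.sum_congr rfl fun i _ => by rw [hδ]; ring
  have fact1 : (A - B) ^ 2 ≤ c₁ * E₁ := by
    rw [hAB, mul_pow]
    have := CS β₁ hβ₁ δ
    calc c₁ ^ 2 * (∑ i ∈ s, β₁ ^ (j - i) * δ i) ^ 2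
        ≤ c₁ ^ 2 * ((∑ i ∈ s, β₁ ^ (j - i)) * E₁) := by
          apply mul_le_mul_of_nonneg_left _ (by positivity)
          exact this
      _ = (c₁ * ∑ i ∈ s, β₁ ^ (j - i)) * (c₁ * E₁) := by ring
      _ = c₁ * E₁ := by rw [hS₁, one_mul]
  -- Fact 2 : c₂ * B^2 ≤ c₁ * V₂
  have fact2 : c₂ * B ^ 2 ≤ c₁ * V₂ := by
    have hB2 : B ^ 2 ≤ c₁ * ∑ i ∈ s, β₁ ^ (j - i) * (g₂ i l) ^ 2 := by
      rw [hB, adamMhat, mul_pow]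
      calc c₁ ^ 2 * (∑ i ∈ s, β₁ ^ (j - i) * g₂ i l) ^ 2
          ≤ c₁ ^ 2 * ((∑ i ∈ s, β₁ ^ (j - i)) * ∑ i ∈ s, β₁ ^ (j - i) * (g₂ i l) ^ 2) := by
            apply mul_le_mul_of_nonneg_left _ (by positivity)
            exact CS β₁ hβ₁ (fun i => g₂ i l)
        _ = (c₁ * ∑ i ∈ s, β₁ ^ (j - i)) * (c₁ * ∑ i ∈ s, β₁ ^ (j - i) * (g₂ i l) ^ 2) := by ring
        _ = c₁ * ∑ i ∈ s, β₁ ^ (j - i) * (g₂ i l) ^ 2 := by rw [hS₁, one_mul]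
    have hmono : ∑ i ∈ s, β₁ ^ (j - i) * (g₂ i l) ^ 2 ≤ ∑ i ∈ s, β₂ ^ (j - i) * (g₂ i l) ^ 2 :=
      Finset.sum_le_sum fun i _ =>
        mul_le_mul_of_nonneg_right (pow_le_pow_left₀ hβ₁.le hβ₁₂ _) (sq_nonneg _)
    have hV₂eq : c₂ * ∑ i ∈ s, β₂ ^ (j - i) * (g₂ i l) ^ 2 = V₂ := by
      rw [hV₂, adamVhat]
    calc c₂ * B ^ 2 ≤ c₂ * (c₁ * ∑ i ∈ s, β₁ ^ (j - i) * (g₂ i l) ^ 2) :=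
          mul_le_mul_of_nonneg_left hB2 hc₂.le
      _ ≤ c₂ * (c₁ * ∑ i ∈ s, β₂ ^ (j - i) * (g₂ i l) ^ 2) :=
          mul_le_mul_of_nonneg_left (mul_le_mul_of_nonneg_left hmono hc₁.le) hc₂.le
      _ = c₁ * (c₂ * ∑ i ∈ s, β₂ ^ (j - i) * (g₂ i l) ^ 2) := by ring
      _ = c₁ * V₂ := by rw [hV₂eq]
  -- Fact 3 : (s₂ - s₁)^2 ≤ c₂ * E₂
  have fact3 : (s₂ - s₁) ^ 2 ≤ c₂ * E₂ := by
    have key : ∀ u v : ℕ → Fin n → ℝ,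
        Real.sqrt (adamVhat β₂ j u l) ≤ Real.sqrt (adamVhat β₂ j v l) +
          Real.sqrt (c₂ * ∑ i ∈ s, β₂ ^ (j - i) * (u i l - v i l) ^ 2) := by
      intro u v
      have h1 : adamVhat β₂ j u l =
          ∑ i ∈ s, (Real.sqrt (c₂ * β₂ ^ (j - i)) * v i l +
            Real.sqrt (c₂ * β₂ ^ (j - i)) * (u i l - v i l)) ^ 2 := by
        rw [adamVhat, ← hc₂def, ← hs, Finset.mul_sum]
        exact Finset.sum_congr rfl fun i _ => by
          rw [← mul_add]
          rw [mul_pow, Real.sq_sqrt (by positivity)]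
          ring
      have h2 : adamVhat β₂ j v l = ∑ i ∈ s, (Real.sqrt (c₂ * β₂ ^ (j - i)) * v i l) ^ 2 := by
        rw [adamVhat, ← hc₂def, ← hs, Finset.mul_sum]
        exact Finset.sum_congr rfl fun i _ => by
          rw [mul_pow, Real.sq_sqrt (by positivity)]; ring
      have h3 : c₂ * ∑ i ∈ s, β₂ ^ (j - i) * (u i l - v i l) ^ 2 =
          ∑ i ∈ s, (Real.sqrt (c₂ * β₂ ^ (j - i)) * (u i l - v i l)) ^ 2 := by
        rw [Finset.mul_sum]
        exact Finset.sum_congr rfl fun i _ => by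
          rw [mul_pow, Real.sq_sqrt (by positivity)]; ring
      rw [h1, h2, h3]
      exact minkowski_aux s _ _
    have k1 := key g₁ g₂
    have k2 := key g₂ g₁
    have hsymm : ∑ i ∈ s, β₂ ^ (j - i) * (g₂ i l - g₁ i l) ^ 2 = E₂ := by
      rw [hE₂]
      exact Finset.sum_congr rfl fun i _ => by rw [hδ]; ring
    rw [hsymm] at k2
    have hsq : Real.sqrt (c₂ * E₂) ^ 2 = c₂ * E₂ := Real.sq_sqrt (by positivity)
    have : (s₂ - s₁) = Real.sqrt V₂ - Real.sqrt V₁ := by rw [hs₁def, hs₂def]; ring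
    rw [this, ← hsq]
    exact sq_le_sq' (by linarith) (by linarith)
  -- decomposition
  clear_value s₁ s₂ A B V₁ V₂ E₁ E₂ c₁ c₂ δ s
  have hdecomp : A / s₁ - B / s₂ = (A - B) / s₁ + B * (s₂ - s₁) / (s₁ * s₂) := by
    field_simp
    ring
  have hεs₁ : ε ^ 2 ≤ s₁ ^ 2 := pow_le_pow_left₀ hε.le hs₁ε 2
  -- term bounds
  have term1 : ((A - B) / s₁) ^ 2 ≤ c₁ * E₁ / ε ^ 2 := by
    rw [div_pow]
    rw [div_le_div_iff₀ (by positivity) (by positivity)]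
    exact mul_le_mul fact1 hεs₁ (by positivity) (by positivity)
  have term2 : (B * (s₂ - s₁) / (s₁ * s₂)) ^ 2 ≤ c₁ * E₂ / ε ^ 2 := by
    rw [div_pow]
    rw [div_le_div_iff₀ (by positivity) (by positivity)]
    have hprod : B ^ 2 * (s₂ - s₁) ^ 2 ≤ (c₁ / c₂ * V₂) * (c₂ * E₂) := by
      have h1 : B ^ 2 ≤ c₁ / c₂ * V₂ := by
        rw [div_mul_eq_mul_div, le_div_iff₀ hc₂]
        linarith [fact2]
      exact mul_le_mul h1 fact3 (sq_nonneg _) (by positivity)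
    have hprod' : B ^ 2 * (s₂ - s₁) ^ 2 ≤ c₁ * V₂ * E₂ := by
      calc B ^ 2 * (s₂ - s₁) ^ 2 ≤ (c₁ / c₂ * V₂) * (c₂ * E₂) := hprod
        _ = c₁ * V₂ * E₂ := by field_simp
    calc (B * (s₂ - s₁)) ^ 2 * ε ^ 2 = (B ^ 2 * (s₂ - s₁) ^ 2) * ε ^ 2 := by ring
      _ ≤ (c₁ * V₂ * E₂) * ε ^ 2 := mul_le_mul_of_nonneg_right hprod' (by positivity)
      _ ≤ c₁ * E₂ * (s₁ * s₂) ^ 2 := by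
          have hm : V₂ * ε ^ 2 ≤ s₂ ^ 2 * s₁ ^ 2 :=
            mul_le_mul hs₂sq hεs₁ (by positivity) (by positivity)
          calc (c₁ * V₂ * E₂) * ε ^ 2 = (c₁ * E₂) * (V₂ * ε ^ 2) := by ring
            _ ≤ (c₁ * E₂) * (s₂ ^ 2 * s₁ ^ 2) := mul_le_mul_of_nonneg_left hm (by positivity)
            _ = c₁ * E₂ * (s₁ * s₂) ^ 2 := by ring
  -- combine
  have hsum : ∑ i ∈ s, (β₁ ^ (j - i) + 2 * β₂ ^ (j - i)) * δ i ^ 2 = E₁ + 2 * E₂ := by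
    rw [hE₁, hE₂, Finset.mul_sum, ← Finset.sum_add_distrib]
    exact Finset.sum_congr rfl fun i _ => by ring
  have hconst : 2 * (1 - β₁) / (ε ^ 2 * (1 - β₁ ^ j)) = 2 * c₁ / ε ^ 2 := by
    rw [hc₁def, ← mul_div_assoc, div_div, mul_comm (1 - β₁ ^ j) (ε ^ 2)]
  calc (A / s₁ - B / s₂) ^ 2
      = ((A - B) / s₁ + B * (s₂ - s₁) / (s₁ * s₂)) ^ 2 := by rw [hdecomp]
    _ ≤ 2 * ((A - B) / s₁) ^ 2 + 2 * (B * (s₂ - s₁) / (s₁ * s₂)) ^ 2 := by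
        have key2 : ∀ x y : ℝ, (x + y) ^ 2 ≤ 2 * x ^ 2 + 2 * y ^ 2 := fun x y =>
          calc (x + y) ^ 2 = 2 * x ^ 2 + 2 * y ^ 2 - (x - y) ^ 2 := by ring
            _ ≤ 2 * x ^ 2 + 2 * y ^ 2 := by linarith [sq_nonneg (x - y)]
        exact key2 _ _
    _ ≤ 2 * (c₁ * E₁ / ε ^ 2) + 2 * (c₁ * E₂ / ε ^ 2) := by linarith
    _ ≤ (2 * c₁ / ε ^ 2) * (E₁ + 2 * E₂) := by
        have h0 : 0 ≤ 2 * (c₁ * E₂) / ε ^ 2 := by positivity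
        have heq : 2 * c₁ / ε ^ 2 * (E₁ + 2 * E₂) -
            (2 * (c₁ * E₁ / ε ^ 2) + 2 * (c₁ * E₂ / ε ^ 2)) = 2 * (c₁ * E₂) / ε ^ 2 := by
          field_simp
          ring
        linarith
    _ = (2 * (1 - β₁) / (ε ^ 2 * (1 - β₁ ^ j))) *
          ∑ i ∈ s, (β₁ ^ (j - i) + 2 * β₂ ^ (j - i)) * (g₁ i l - g₂ i l) ^ 2 := by
        rw [hconst]
        congr 1
        rw [← hsum]
        exact Finset.sum_congr rfl fun i _ => by simp [hδ]

/-- Lipschitz stability of the Adam update with respect to the gradient sequence: with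
`Δ_i² = Σ_l (g¹_i l − g²_i l)²`, the squared Euclidean norm of the difference of the two
Adam updates is at most `(2(1−β₁)/(ε²(1−β₁^j))) Σ_{i=1}^{j} (β₁^{j−i} + 2β₂^{j−i}) Δ_i²`. -/
theorem stmt_18 (β₁ β₂ ε : ℝ) (hβ₁ : 0 < β₁) (hβ₁₂ : β₁ ≤ β₂) (hβ₂ : β₂ < 1) (hε : 0 < ε)
    (n j : ℕ) (hj : 1 ≤ j) (g₁ g₂ : ℕ → Fin n → ℝ) :
    ∑ l : Fin n,
        (adamMhat β₁ j g₁ l / (Real.sqrt (adamVhat β₂ j g₁ l) + ε) -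
          adamMhat β₁ j g₂ l / (Real.sqrt (adamVhat β₂ j g₂ l) + ε)) ^ 2 ≤
      (2 * (1 - β₁) / (ε ^ 2 * (1 - β₁ ^ j))) *
        ∑ i ∈ Finset.Icc 1 j,
          (β₁ ^ (j - i) + 2 * β₂ ^ (j - i)) * ∑ l : Fin n, (g₁ i l - g₂ i l) ^ 2 := by
  calc ∑ l : Fin n,
        (adamMhat β₁ j g₁ l / (Real.sqrt (adamVhat β₂ j g₁ l) + ε) -
          adamMhat β₁ j g₂ l / (Real.sqrt (adamVhat β₂ j g₂ l) + ε)) ^ 2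
      ≤ ∑ l : Fin n, (2 * (1 - β₁) / (ε ^ 2 * (1 - β₁ ^ j))) *
          ∑ i ∈ Finset.Icc 1 j, (β₁ ^ (j - i) + 2 * β₂ ^ (j - i)) * (g₁ i l - g₂ i l) ^ 2 :=
        Finset.sum_le_sum fun l _ => adam_key β₁ β₂ ε hβ₁ hβ₁₂ hβ₂ hε n j hj g₁ g₂ l
    _ = (2 * (1 - β₁) / (ε ^ 2 * (1 - β₁ ^ j))) *
        ∑ i ∈ Finset.Icc 1 j,
          (β₁ ^ (j - i) + 2 * β₂ ^ (j - i)) * ∑ l : Fin n, (g₁ i l - g₂ i l) ^ 2 := by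
        rw [← Finset.mul_sum, Finset.sum_comm]
        congr 1
        exact Finset.sum_congr rfl fun i _ => by rw [Finset.mul_sum]
end
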